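/- Let A be a GNN of dimension d with L layers in which every layer uses sum aggregation and a combination function COMB^(t)(x,y)=σ(xC^(t)+yA^(t)+b^(t)) where all entries of C^(t), A^(t), b^(t) are integers, and whose classification function is linear with integer coefficients: CLS(x)=1 iff Σ_{i=1}^d a_i x_i ≥ 0 with a_i ∈ ℤ. Then there exists a K^# formula tr(A) such that for every pointed graph (G,u), the GNN A accepts (G,u) if and only if (G,u) satisfies tr(A). -/
import Mathlib


open scoped Classical

/-- A finite labeled directed graph: edges and a valuation of atomic
propositions (indexed by `ℕ`) at each vertex. -/
structure LGraph (V : Type) [Fintype V] where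
  edge : V → V → Bool
  label : V → ℕ → Bool

mutual
/-- Formulas of the logic `K^#`. -/
inductive KForm : Type where
  | atom : ℕ → KForm
  | not : KForm → KForm
  | or : KForm → KForm → KForm
  | ge0 : KExpr → KForm
/-- Expressions of the logic `K^#`. -/
inductive KExpr : Type where
  | const : ℤ → KExpr
  | ind : KForm → KExpr
  | count : KForm → KExpr
  | add : KExpr → KExpr → KExpr
  | scale : ℤ → KExpr → KExpr
end

mutual
/-- Truth of a `K^#` formula at a pointed graph. -/
def KForm.sat {V : Type} [Fintype V] (G : LGraph V) (u : V) : KForm → Bool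
  | .atom p => G.label u p
  | .not φ => !(KForm.sat G u φ)
  | .or φ ψ => KForm.sat G u φ || KForm.sat G u ψ
  | .ge0 E => decide (0 ≤ KExpr.val G u E)
/-- Value of a `K^#` expression at a pointed graph. -/
def KExpr.val {V : Type} [Fintype V] (G : LGraph V) (u : V) : KExpr → ℤ
  | .const c => c
  | .ind φ => if KForm.sat G u φ then 1 else 0
  | .count φ =>
      ((Finset.univ.filter (fun v => G.edge u v = true ∧ KForm.sat G v φ = true)).card : ℤ)
  | .add E₁ E₂ => KExpr.val G u E₁ + KExpr.val G u E₂
  | .scale c E => c * KExpr.val G u E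
end

/-- The clipped (truncated) ReLU `σ(x) = min(max(0,x),1)`. -/
def clip (x : ℝ) : ℝ := min (max 0 x) 1

/-- A sum-aggregation GNN: dimension `d`, number `k ≤ d` of input propositions,
`L` layers, each layer `t` given by integer matrices `C t`, `A t` and an integer
bias vector `b t` (the combination function being `σ(xC + yA + b)` where `y` is
the sum of the states of the successors), and a classification function `cls`. -/
structure GNN where
  d : ℕ
  k : ℕ
  hk : k ≤ d
  L : ℕ
  C : ℕ → Matrix (Fin d) (Fin d) ℤ
  A : ℕ → Matrix (Fin d) (Fin d) ℤ
  b : ℕ → Fin d → ℤ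
  cls : (Fin d → ℝ) → Bool

/-- The state of the GNN after `t` layers: the initial state lists the truth values
of the atomic propositions `p_0, …, p_{k-1}` padded with zeros, and
`x_{t+1}(u) = σ(x_t(u)·C + (Σ_{(u,v)∈E} x_t(v))·A + b)`. -/
noncomputable def GNN.state (N : GNN) {V : Type} [Fintype V] (G : LGraph V) :
    ℕ → V → Fin N.d → ℝ
  | 0 => fun u i => if i.val < N.k ∧ G.label u i.val = true then 1 else 0
  | t + 1 => fun u i =>
      clip ((∑ j, N.state G t u j * (N.C t j i : ℝ))
        + (∑ j, (∑ v ∈ Finset.univ.filter (fun v => G.edge u v = true), N.state G t v j)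
            * (N.A t j i : ℝ))
        + (N.b t i : ℝ))

/-- The GNN accepts a pointed graph iff the classification function returns 1 (true)
on the final state. -/
def GNN.accepts (N : GNN) {V : Type} [Fintype V] (G : LGraph V) (u : V) : Prop :=
  N.cls (N.state G N.L u) = true

/-- Sum of a finite family of expressions. -/
def KExpr.sumFin : (n : ℕ) → (Fin n → KExpr) → KExpr
  | 0, _ => .const 0
  | n + 1, f => .add (KExpr.sumFin n (fun i => f i.castSucc)) (f (Fin.last n))

lemma KExpr.val_sumFin {V : Type} [Fintype V] (G : LGraph V) (u : V) :
    ∀ (n : ℕ) (f : Fin n → KExpr),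
      KExpr.val G u (KExpr.sumFin n f) = ∑ i, KExpr.val G u (f i)
  | 0, f => by simp [KExpr.sumFin, KExpr.val]
  | n + 1, f => by
    rw [Fin.sum_univ_castSucc]
    simp [KExpr.sumFin, KExpr.val, KExpr.val_sumFin]

lemma clip_int (z : ℤ) : clip (z : ℝ) = if 1 ≤ z then 1 else 0 := by
  unfold clip
  rcases le_or_gt 1 z with h | h
  · have h' : (1 : ℝ) ≤ (z : ℝ) := by exact_mod_cast h
    rw [if_pos h, max_eq_right (le_trans zero_le_one h'), min_eq_right h']
  · have h0 : z ≤ 0 := by omega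
    have h' : (z : ℝ) ≤ 0 := by exact_mod_cast h0
    rw [if_neg (by omega), max_eq_left h', min_eq_left zero_le_one]

/-- The formula expressing that coordinate `i` of the state after `t` layers is `1`. -/
def GNN.form (N : GNN) : ℕ → Fin N.d → KForm
  | 0 => fun i => if i.val < N.k then .atom i.val else .ge0 (.const (-1))
  | t + 1 => fun i =>
      .ge0 (.add (.add
        (KExpr.sumFin N.d (fun j => .scale (N.C t j i) (.ind (N.form t j))))
        (KExpr.sumFin N.d (fun j => .scale (N.A t j i) (.count (N.form t j)))))
        (.const (N.b t i - 1)))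

lemma GNN.state_eq (N : GNN) {V : Type} [Fintype V] (G : LGraph V) :
    ∀ (t : ℕ) (u : V) (i : Fin N.d),
      N.state G t u i = if KForm.sat G u (N.form t i) then 1 else 0 := by
  intro t
  induction t with
  | zero =>
    intro u i
    by_cases h : i.val < N.k
    · simp [GNN.state, GNN.form, h, KForm.sat]
    · simp [GNN.state, GNN.form, h, KForm.sat, KExpr.val]
  | succ t ih =>
    intro u i
    have hval : ∀ j : Fin N.d, N.state G t u j =
        ((KExpr.val G u (.ind (N.form t j)) : ℤ) : ℝ) := by
      intro j; rw [ih]; simp [KExpr.val]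
    have hcount : ∀ j : Fin N.d,
        (∑ v ∈ Finset.univ.filter (fun v => G.edge u v = true), N.state G t v j) =
        ((KExpr.val G u (.count (N.form t j)) : ℤ) : ℝ) := by
      intro j
      simp only [KExpr.val]
      rw [Finset.sum_congr rfl (fun v _ => ih v j)]
      rw [Finset.sum_boole, Finset.filter_filter]
      norm_num
    have h1 : (∑ j, N.state G t u j * (N.C t j i : ℝ))
        = ((KExpr.val G u (KExpr.sumFin N.d
            (fun j => .scale (N.C t j i) (.ind (N.form t j)))) : ℤ) : ℝ) := by
      rw [KExpr.val_sumFin]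
      push_cast
      refine Finset.sum_congr rfl fun j _ => ?_
      rw [hval j]
      simp only [KExpr.val]
      push_cast
      ring
    have h2 : (∑ j, (∑ v ∈ Finset.univ.filter (fun v => G.edge u v = true),
          N.state G t v j) * (N.A t j i : ℝ))
        = ((KExpr.val G u (KExpr.sumFin N.d
            (fun j => .scale (N.A t j i) (.count (N.form t j)))) : ℤ) : ℝ) := by
      rw [KExpr.val_sumFin]
      push_cast
      refine Finset.sum_congr rfl fun j _ => ?_
      rw [hcount j]
      simp only [KExpr.val]
      push_cast
      ring
    show clip _ = _
    rw [h1, h2]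
    set z1 := KExpr.val G u (KExpr.sumFin N.d
      (fun j => .scale (N.C t j i) (.ind (N.form t j)))) with hz1
    set z2 := KExpr.val G u (KExpr.sumFin N.d
      (fun j => .scale (N.A t j i) (.count (N.form t j)))) with hz2
    have hcast : ((z1 : ℝ) + (z2 : ℝ) + (N.b t i : ℝ))
        = ((z1 + z2 + N.b t i : ℤ) : ℝ) := by push_cast; ring
    rw [hcast, clip_int]
    simp only [GNN.form, KForm.sat, KExpr.val, ← hz1, ← hz2, decide_eq_true_iff]
    have : (1 ≤ z1 + z2 + N.b t i) ↔ (0 ≤ z1 + z2 + (N.b t i - 1)) := by omega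
    rw [if_congr this rfl rfl]

/-- For every GNN `N` with sum aggregation, integer-weight combination functions
`σ(xC+yA+b)`, and linear classification with integer coefficients
(`CLS(x) = 1` iff `Σ_i a_i x_i ≥ 0`), there is a `K^#` formula `tr(N)` such that
`N` accepts a pointed graph `(G,u)` iff `(G,u)` satisfies `tr(N)`. -/
theorem gnn_to_logic (N : GNN) (a : Fin N.d → ℤ)
    (hcls : ∀ x : Fin N.d → ℝ, N.cls x = decide (0 ≤ ∑ i, (a i : ℝ) * x i)) :
    ∃ ψ : KForm, ∀ (V : Type) [Fintype V] (G : LGraph V) (u : V),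
      N.accepts G u ↔ KForm.sat G u ψ = true := by
  refine ⟨.ge0 (KExpr.sumFin N.d fun i => .scale (a i) (.ind (N.form N.L i))), ?_⟩
  intro V _ G u
  unfold GNN.accepts
  rw [hcls]
  have key : (∑ i, (a i : ℝ) * N.state G N.L u i)
      = ((∑ i, KExpr.val G u (.scale (a i) (.ind (N.form N.L i))) : ℤ) : ℝ) := by
    push_cast
    refine Finset.sum_congr rfl fun i _ => ?_
    rw [N.state_eq]
    simp only [KExpr.val]
    push_cast
    ring
  simp only [KForm.sat, KExpr.val_sumFin, decide_eq_true_eq, key]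
  exact_mod_cast Iff.rfl
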